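/- β-reduction on λ-terms is confluent: if a →β* b and a →β* c then there is d with b →β* d and c →β* d. -/

import Mathlib

/-!
Every term reduces to its full superdevelopment `dev t`, every one-step reduct of `t` still
reduces to `dev t`, and `t → t'` implies `dev t →* dev t'`. This Z-property of `dev` closes
any peak `b ←* a →* c` by a strip argument. The substantial case of monotonicity is a root
β-step, where one needs `(dev t)[k := dev u] →* dev (t[k := u])`.
-/

/-- Untyped λ-terms in de Bruijn representation (terms up to α-equivalence). -/
inductive Lam : Type
  | var : Nat → Lam
  | app : Lam → Lam → Lam
  | abs : Lam → Lam
  deriving DecidableEq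

namespace Lam

/-- Lift (shift up) free variables ≥ k. -/
def lift : Lam → Nat → Lam
  | var i, k => if i < k then var i else var (i + 1)
  | app s t, k => app (lift s k) (lift t k)
  | abs t, k => abs (lift t (k + 1))

/-- Capture-avoiding substitution `t[x := u]`. -/
def subst : Lam → Nat → Lam → Lam
  | var i, k, u => if i < k then var i else if i = k then u else var (i - 1)
  | app s t, k, u => app (subst s k u) (subst t k u)
  | abs t, k, u => abs (subst t (k + 1) (lift u 0))

/-- `x` occurs free in a term. -/
def IsFree (x : Nat) : Lam → Prop
  | var i => i = x
  | app s t => IsFree x s ∨ IsFree x t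
  | abs t => IsFree (x + 1) t

/-- β-reduction: the compatible closure of the β-rule. -/
inductive Beta : Lam → Lam → Prop
  | beta (t s : Lam) : Beta (app (abs t) s) (subst t 0 s)
  | appL {s s' : Lam} (t : Lam) : Beta s s' → Beta (app s t) (app s' t)
  | appR (s : Lam) {t t' : Lam} : Beta t t' → Beta (app s t) (app s t')
  | abs {t t' : Lam} : Beta t t' → Beta (abs t) (abs t')

/-- Reflexive-transitive closure of β-reduction. -/
abbrev Betas : Lam → Lam → Prop := Relation.ReflTransGen Beta

/-- Application with built-in β-reduction at the root. -/
def appBeta : Lam → Lam → Lam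
  | abs u, v => subst u 0 v
  | s, v => app s v

/-- The full-superdevelopment map. -/
def dev : Lam → Lam
  | var i => var i
  | abs t => abs (dev t)
  | app s t => appBeta (dev s) (dev t)

end Lam

theorem Relation.ReflTransGen.join_of_zProperty {α : Type*} {r : α → α → Prop} (f : α → α)
    (hext : ∀ a, ReflTransGen r a (f a))
    (hreduct : ∀ {a b}, r a b → ReflTransGen r b (f a))
    (hmono : ∀ {a b}, r a b → ReflTransGen r (f a) (f b))
    {a b c : α} (hb : ReflTransGen r a b) (hc : ReflTransGen r a c) :
    Join (ReflTransGen r) b c := by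
  induction hb with
  | refl => exact ⟨c, hc, .refl⟩
  | tail _ hstep ih =>
    obtain ⟨d, hbd, hcd⟩ := ih
    exact ⟨f d, (hreduct hstep).trans (ReflTransGen.lift' f (fun _ _ h => hmono h) _ _ hbd),
      hcd.trans (hext d)⟩

namespace Lam

theorem lift_lift (t : Lam) {i j : Nat} (h : i ≤ j) :
    lift (lift t i) (j + 1) = lift (lift t j) i := by
  induction t generalizing i j with
  | var _ => grind [lift]
  | app s t ihs iht => simp only [lift, ihs h, iht h]
  | abs t ih => simp only [lift, ih (Nat.succ_le_succ h)]

theorem lift_subst_of_le (t u : Lam) {j k : Nat} (h : j ≤ k) :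
    lift (subst t k u) j = subst (lift t j) (k + 1) (lift u j) := by
  induction t generalizing u j k with
  | var _ => grind [lift, subst]
  | app s t ihs iht => simp only [subst, lift, ihs _ h, iht _ h]
  | abs t ih => simp only [subst, lift, ih _ (Nat.succ_le_succ h), lift_lift u (Nat.zero_le j)]

theorem lift_subst_of_ge (t u : Lam) {j k : Nat} (h : k ≤ j) :
    lift (subst t k u) j = subst (lift t (j + 1)) k (lift u j) := by
  induction t generalizing u j k with
  | var _ => grind [lift, subst]
  | app s t ihs iht => simp only [subst, lift, ihs _ h, iht _ h]
  | abs t ih => simp only [subst, lift, ih _ (Nat.succ_le_succ h), lift_lift u (Nat.zero_le j)]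

theorem subst_lift (t u : Lam) (k : Nat) : subst (lift t k) k u = t := by
  induction t generalizing u k with
  | var _ => grind [lift, subst]
  | app s t ihs iht => simp only [lift, subst, ihs, iht]
  | abs t ih => simp only [lift, subst, ih]

theorem subst_subst (t u v : Lam) {i j : Nat} (h : i ≤ j) :
    subst (subst t i u) j v = subst (subst t (j + 1) (lift v i)) i (subst u j v) := by
  induction t generalizing u v i j with
  | var _ => grind [lift, subst, subst_lift]
  | app s t ihs iht => simp only [subst, ihs _ _ h, iht _ _ h]
  | abs t ih =>
    simp only [subst, ih _ _ (Nat.succ_le_succ h), lift_lift v (Nat.zero_le i),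
      lift_subst_of_le u v (Nat.zero_le j)]

theorem lift_appBeta (s t : Lam) (k : Nat) :
    lift (appBeta s t) k = appBeta (lift s k) (lift t k) := by
  cases s with
  | abs u => exact lift_subst_of_ge u t (Nat.zero_le k)
  | var _ => simp only [appBeta, lift]; split_ifs <;> rfl
  | app _ _ => rfl

theorem Beta.lift {t t' : Lam} (h : Beta t t') (k : Nat) : Beta (t.lift k) (t'.lift k) := by
  induction h generalizing k with
  | beta t s => rw [Lam.lift, Lam.lift, lift_subst_of_ge t s (Nat.zero_le k)]; exact .beta _ _
  | appL t _ ih => exact .appL _ (ih k)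
  | appR s _ ih => exact .appR _ (ih k)
  | abs _ ih => exact .abs (ih (k + 1))

theorem Beta.subst {t t' : Lam} (h : Beta t t') (k : Nat) (u : Lam) :
    Beta (t.subst k u) (t'.subst k u) := by
  induction h generalizing k u with
  | beta t s => rw [Lam.subst, Lam.subst, subst_subst t s u (Nat.zero_le k)]; exact .beta _ _
  | appL t _ ih => exact .appL _ (ih k u)
  | appR s _ ih => exact .appR _ (ih k u)
  | abs _ ih => exact .abs (ih (k + 1) _)

namespace Betas

theorem app {s s' t t' : Lam} (hs : Betas s s') (ht : Betas t t') :
    Betas (Lam.app s t) (Lam.app s' t') :=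
  (Relation.ReflTransGen.lift (Lam.app · t) (fun _ _ h => Beta.appL t h) _ _ hs).trans
    (Relation.ReflTransGen.lift (Lam.app s' ·) (fun _ _ h => Beta.appR s' h) _ _ ht)

theorem abs {t t' : Lam} (h : Betas t t') : Betas (Lam.abs t) (Lam.abs t') :=
  Relation.ReflTransGen.lift Lam.abs (fun _ _ h => Beta.abs h) _ _ h

theorem lift {t t' : Lam} (h : Betas t t') (k : Nat) : Betas (t.lift k) (t'.lift k) :=
  Relation.ReflTransGen.lift (Lam.lift · k) (fun _ _ h => Beta.lift h k) _ _ h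

theorem subst_right (t : Lam) {u u' : Lam} (h : Betas u u') (k : Nat) :
    Betas (t.subst k u) (t.subst k u') := by
  induction t generalizing u u' k with
  | var _ => simp only [Lam.subst]; split_ifs <;> first | exact .refl | exact h
  | app s t ihs iht => exact (ihs h k).app (iht h k)
  | abs t ih => exact (ih (h.lift 0) (k + 1)).abs

theorem subst {t t' u u' : Lam} (ht : Betas t t') (hu : Betas u u') (k : Nat) :
    Betas (t.subst k u) (t'.subst k u') :=
  (Relation.ReflTransGen.lift (Lam.subst · k u) (fun _ _ h => Beta.subst h k u) _ _ ht).trans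
    (subst_right t' hu k)

theorem exists_eq_abs {u s : Lam} (h : Betas (Lam.abs u) s) :
    ∃ u', s = Lam.abs u' ∧ Betas u u' := by
  induction h with
  | refl => exact ⟨u, rfl, .refl⟩
  | tail _ hstep ih =>
    obtain ⟨w, rfl, hw⟩ := ih
    cases hstep with
    | abs h => exact ⟨_, rfl, hw.tail h⟩

theorem app_appBeta (s t : Lam) : Betas (Lam.app s t) (appBeta s t) := by
  cases s with
  | abs u => exact .single (.beta u t)
  | var _ | app _ _ => exact .refl

theorem appBeta {s s' t t' : Lam} (hs : Betas s s') (ht : Betas t t') :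
    Betas (appBeta s t) (appBeta s' t') := by
  cases s with
  | abs u =>
    obtain ⟨u', rfl, hu⟩ := hs.exists_eq_abs
    exact hu.subst ht 0
  | var _ | app _ _ => exact (hs.app ht).trans (app_appBeta s' t')

theorem subst_appBeta (s t u : Lam) (k : Nat) :
    Betas ((Lam.appBeta s t).subst k u) (Lam.appBeta (s.subst k u) (t.subst k u)) := by
  cases s with
  | abs w => rw [Lam.appBeta, subst_subst w t u (Nat.zero_le k)]; exact .refl
  | var _ => simp only [Lam.appBeta, Lam.subst]; split_ifs <;> exact app_appBeta _ _
  | app _ _ => exact .refl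

end Betas

theorem betas_dev (t : Lam) : Betas t (dev t) := by
  induction t with
  | var _ => exact .refl
  | app s t ihs iht => exact (ihs.app iht).trans (Betas.app_appBeta _ _)
  | abs t ih => exact ih.abs

theorem dev_lift (t : Lam) (k : Nat) : dev (t.lift k) = (dev t).lift k := by
  induction t generalizing k with
  | var _ => simp only [lift, dev]; split_ifs <;> rfl
  | abs t ih => simp only [lift, dev, ih]
  | app s t ihs iht => simp only [lift, dev, ihs, iht, lift_appBeta]

theorem subst_dev_betas_dev_subst (t u : Lam) (k : Nat) :
    Betas ((dev t).subst k (dev u)) (dev (t.subst k u)) := by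
  induction t generalizing u k with
  | var _ => simp only [dev, subst]; split_ifs <;> exact .refl
  | abs t ih =>
    simp only [dev, subst, ← dev_lift u 0]
    exact (ih _ (k + 1)).abs
  | app s t ihs iht => exact (Betas.subst_appBeta _ _ _ k).trans ((ihs u k).appBeta (iht u k))

theorem Beta.betas_dev {t t' : Lam} (h : Beta t t') : Betas t' (dev t) := by
  induction h with
  | beta t s => exact (Lam.betas_dev t).subst (Lam.betas_dev s) 0
  | appL t _ ih => exact (ih.app (Lam.betas_dev t)).trans (Betas.app_appBeta _ _)
  | appR s _ ih => exact ((Lam.betas_dev s).app ih).trans (Betas.app_appBeta _ _)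
  | abs _ ih => exact ih.abs

theorem Beta.dev_betas_dev {t t' : Lam} (h : Beta t t') : Betas (dev t) (dev t') := by
  induction h with
  | beta t s => exact subst_dev_betas_dev_subst t s 0
  | appL t _ ih => exact ih.appBeta .refl
  | appR s _ ih => exact Betas.appBeta .refl ih
  | abs _ ih => exact ih.abs

end Lam

theorem beta_confluent {a b c : Lam} (hb : Lam.Betas a b) (hc : Lam.Betas a c) :
    ∃ d, Lam.Betas b d ∧ Lam.Betas c d :=
  Relation.ReflTransGen.join_of_zProperty Lam.dev Lam.betas_dev Lam.Beta.betas_dev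
    Lam.Beta.dev_betas_dev hb hc
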